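/- arXiv:2208.08763 — 5 statements merged into one kernel-verified Lean document; each statement's English description precedes it below -/
import Mathlib

section
/- Let n be a natural number and let g be a non-identity permutation of Fin n. If the normalizer N of the cyclic subgroup ⟨g⟩ inside the symmetric group Sym(n) acts transitively on Fin n (i.e., for all a, b ∈ Fin n there exists σ ∈ N with σ(a) = b), then g is semiregular, that is, all orbits of the cyclic subgroup ⟨g⟩ on Fin n have the same cardinality. -/
namespace MulAction

open scoped Pointwise

variable {G α : Type*} [Group G] [MulAction G α] {H : Subgroup G} {g : G}

theorem smul_orbit_eq_orbit_smul_of_mem_normalizer (hg : g ∈ Subgroup.normalizer (H : Set G))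
    (a : α) : g • orbit H a = orbit H (g • a) := by
  simp only [orbit, Set.smul_set_range]
  ext
  simp only [Set.mem_range]
  constructor
  · rintro ⟨⟨k, hk⟩, rfl⟩
    refine ⟨⟨g * k * g⁻¹, (Subgroup.mem_normalizer_iff.mp hg k).mp hk⟩, ?_⟩
    simp only [Subgroup.mk_smul, ← smul_smul, inv_smul_smul]
  · rintro ⟨⟨k, hk⟩, rfl⟩
    refine ⟨⟨g⁻¹ * k * g, (Subgroup.mem_normalizer_iff''.mp hg k).mp hk⟩, ?_⟩
    simp only [Subgroup.mk_smul, ← smul_smul, smul_inv_smul]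

theorem card_orbit_smul_of_mem_normalizer (hg : g ∈ Subgroup.normalizer (H : Set G)) (a : α) :
    Nat.card (orbit H (g • a)) = Nat.card (orbit H a) := by
  simp only [Nat.card_coe_set_eq, ← smul_orbit_eq_orbit_smul_of_mem_normalizer hg,
    Set.ncard_smul_set]

end MulAction

theorem stmt_1_general (n : ℕ) (g : Equiv.Perm (Fin n))
    (htrans : ∀ a b : Fin n,
      ∃ σ ∈ Subgroup.normalizer (Subgroup.zpowers g : Set (Equiv.Perm (Fin n))), σ a = b) :
    ∀ a b : Fin n,
      Nat.card (MulAction.orbit (Subgroup.zpowers g) a) =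
        Nat.card (MulAction.orbit (Subgroup.zpowers g) b) := by
  intro a b
  obtain ⟨σ, hσ, rfl⟩ := htrans a b
  exact (MulAction.card_orbit_smul_of_mem_normalizer hσ a).symm

/-- If the normalizer of `⟨g⟩` in `Sym(n)` is transitive on `Fin n`, then all orbits of
`⟨g⟩` on `Fin n` have the same cardinality, i.e. `g` is semiregular. -/
theorem stmt_1 (n : ℕ) (g : Equiv.Perm (Fin n)) (hg : g ≠ 1)
    (htrans : ∀ a b : Fin n,
      ∃ σ ∈ Subgroup.normalizer (Subgroup.zpowers g : Set (Equiv.Perm (Fin n))), σ a = b) :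
    ∀ a b : Fin n,
      Nat.card (MulAction.orbit (Subgroup.zpowers g) a) =
        Nat.card (MulAction.orbit (Subgroup.zpowers g) b) :=
  stmt_1_general n g htrans
end

section
/- Let G be a finite group and let x, y be non-identity elements of G such that every element of G is a product u·v with u ∈ N_G(⟨x⟩) and v ∈ N_G(⟨y⟩). Then there exist elements x', y' ∈ G, each of prime order, such that every element of G is a product u·v with u ∈ N_G(⟨x'⟩) and v ∈ N_G(⟨y'⟩). -/
/-!
If `g` normalizes `⟨x⟩` then `g x g⁻¹ = x ^ m`, so `g` conjugates each power `x ^ k` to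
`(x ^ k) ^ m`. Hence `N_G(⟨x⟩) ≤ N_G(⟨y⟩)` for every `y ∈ ⟨x⟩`; choosing `y ∈ ⟨x⟩` of prime
order (a suitable power of `x ≠ 1`) can only enlarge both factors of the factorization.
-/

open Subgroup

section

variable {G : Type*} [Group G]

lemma conj_mem_zpowers_self_of_mem_normalizer {g x y : G}
    (hg : g ∈ normalizer (zpowers x : Set G)) (hy : y ∈ zpowers x) :
    g * y * g⁻¹ ∈ zpowers y := by
  obtain ⟨m, hm⟩ := mem_zpowers_iff.mp ((mem_normalizer_iff.mp hg x).mp (mem_zpowers x))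
  obtain ⟨k, rfl⟩ := hy
  refine ⟨m, ?_⟩
  change (x ^ k) ^ m = g * x ^ k * g⁻¹
  rw [← conj_zpow, ← hm, ← zpow_mul, ← zpow_mul, mul_comm]

lemma conj_mem_zpowers_of_mem_normalizer {g x y a : G}
    (hg : g ∈ normalizer (zpowers x : Set G)) (hy : y ∈ zpowers x) (ha : a ∈ zpowers y) :
    g * a * g⁻¹ ∈ zpowers y :=
  zpowers_le.mpr ha <|
    conj_mem_zpowers_self_of_mem_normalizer hg (zpowers_le.mpr hy ha)

lemma normalizer_zpowers_le_of_mem_zpowers {x y : G} (hy : y ∈ zpowers x) :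
    normalizer (zpowers x : Set G) ≤ normalizer (zpowers y : Set G) := by
  intro g hg
  refine mem_normalizer_iff.mpr fun a => ⟨conj_mem_zpowers_of_mem_normalizer hg hy, fun ha => ?_⟩
  simpa [mul_assoc] using conj_mem_zpowers_of_mem_normalizer (inv_mem hg) hy ha

lemma exists_mem_zpowers_prime_orderOf {x : G} (hx : x ≠ 1) (hfin : IsOfFinOrder x) :
    ∃ y ∈ zpowers x, (orderOf y).Prime := by
  have hp : (orderOf x).minFac.Prime := Nat.minFac_prime (by rwa [Ne, orderOf_eq_one_iff])
  refine ⟨x ^ (orderOf x / (orderOf x).minFac), pow_mem (mem_zpowers x) _, ?_⟩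
  rwa [orderOf_pow_orderOf_div hfin.orderOf_pos.ne' (Nat.minFac_dvd _)]

lemma exists_prime_orderOf_normalizer_zpowers_le [Finite G] {x : G} (hx : x ≠ 1) :
    ∃ y : G, (orderOf y).Prime ∧
      normalizer (zpowers x : Set G) ≤ normalizer (zpowers y : Set G) := by
  obtain ⟨y, hy, hprime⟩ := exists_mem_zpowers_prime_orderOf hx (isOfFinOrder_of_finite x)
  exact ⟨y, hprime, normalizer_zpowers_le_of_mem_zpowers hy⟩

end

/-- If a finite group `G` satisfies `G = N_G(⟨x⟩) N_G(⟨y⟩)` for non-identity elements `x, y`,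
then `G = N_G(⟨x'⟩) N_G(⟨y'⟩)` for some elements `x', y'` of prime order. -/
theorem stmt_3 {G : Type*} [Group G] [Finite G] (x y : G) (hx : x ≠ 1) (hy : y ≠ 1)
    (h : ∀ a : G, ∃ u ∈ Subgroup.normalizer (Subgroup.zpowers x : Set G),
      ∃ v ∈ Subgroup.normalizer (Subgroup.zpowers y : Set G), a = u * v) :
    ∃ x' y' : G, (orderOf x').Prime ∧ (orderOf y').Prime ∧
      ∀ a : G, ∃ u ∈ Subgroup.normalizer (Subgroup.zpowers x' : Set G),
        ∃ v ∈ Subgroup.normalizer (Subgroup.zpowers y' : Set G), a = u * v := by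
  obtain ⟨x', hx', hxle⟩ := exists_prime_orderOf_normalizer_zpowers_le hx
  obtain ⟨y', hy', hyle⟩ := exists_prime_orderOf_normalizer_zpowers_le hy
  refine ⟨x', y', hx', hy', fun a => ?_⟩
  obtain ⟨u, hu, v, hv, rfl⟩ := h a
  exact ⟨u, hxle hu, v, hyle hv, rfl⟩
end

section
/- Let n ≥ 5 be a prime number, let x be a transposition in Sym(n) and let y be an n-cycle in Sym(n). Then every element of Sym(n) is a product u·v with u ∈ N_{Sym(n)}(⟨x⟩) and v ∈ N_{Sym(n)}(⟨y⟩). -/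
/-!
For `x = swap a b`, every permutation fixing `a` and `b` commutes with `x`, so lies in `N(⟨x⟩)`.
Hence it suffices that `N(⟨y⟩)` acts 2-transitively: given `g`, pick `v ∈ N(⟨y⟩)` sending
`g⁻¹ a, g⁻¹ b` to `a, b`; then `g v⁻¹` fixes `a` and `b`.

For 2-transitivity, `⟨y⟩` is already transitive, so it is enough to move `y ^ i c` to `y ^ j c`
while fixing `c`. As `n` is prime, the nontrivial powers `y ^ i`, `y ^ j` are again `n`-cycles
generating `⟨y⟩`, so any `w` conjugating `y ^ i` to `y ^ j` normalizes `⟨y⟩`; correcting `w` by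
a power of `y` so that it fixes `c` gives the required element.
-/

open Equiv Equiv.Perm Subgroup

section Group

variable {G : Type*} [Group G]

theorem mem_normalizer_zpowers_of_zpowers_conj_eq {c g : G}
    (h : zpowers (c * g * c⁻¹) = zpowers g) : c ∈ normalizer (zpowers g : Set G) := by
  rw [mem_normalizer_iff_map_conj_eq, MonoidHom.map_zpowers]
  exact h

theorem orderOf_eq_of_mem_zpowers_of_ne_one {y z : G} (hp : (orderOf y).Prime)
    (hz : z ∈ zpowers y) (hz1 : z ≠ 1) : orderOf z = orderOf y := by
  have := Fact.mk hp
  obtain ⟨k, rfl⟩ := hz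
  refine orderOf_eq_prime ?_ hz1
  rw [← zpow_natCast, ← zpow_mul, mul_comm, zpow_mul, zpow_natCast, pow_orderOf_eq_one,
    one_zpow]

theorem zpowers_eq_of_mem_zpowers_of_ne_one {y z : G} (hp : (orderOf y).Prime)
    (hz : z ∈ zpowers y) (hz1 : z ≠ 1) : zpowers z = zpowers y := by
  have : Finite (zpowers y) :=
    (finite_zpowers.mpr (orderOf_pos_iff.mp hp.pos)).to_subtype
  refine eq_of_le_of_card_ge (zpowers_le.mpr hz) ?_
  rw [Nat.card_zpowers, Nat.card_zpowers, orderOf_eq_of_mem_zpowers_of_ne_one hp hz hz1]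

end Group

namespace Equiv.Perm

theorem mem_normalizer_zpowers_swap_of_apply_eq_self {α : Type*} [DecidableEq α] {u : Perm α}
    {a b : α} (ha : u a = a) (hb : u b = b) :
    u ∈ normalizer (zpowers (swap a b) : Set (Perm α)) := by
  apply mem_normalizer_zpowers_of_zpowers_conj_eq
  rw [← swap_apply_apply, ha, hb]

variable {α : Type*} [Fintype α] [DecidableEq α] {y : Perm α}

theorem exists_zpow_apply_eq_of_orderOf_eq_card (hp : (Fintype.card α).Prime)
    (hy : orderOf y = Fintype.card α) (a b : α) : ∃ i : ℤ, (y ^ i) a = b := by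
  have hcyc := isCycle_of_prime_order'' hp hy
  have hsupp : y.support = Finset.univ :=
    Finset.eq_univ_of_card _ (hcyc.orderOf ▸ hy)
  exact hcyc.sameCycle (mem_support.mp (hsupp ▸ Finset.mem_univ a))
    (mem_support.mp (hsupp ▸ Finset.mem_univ b))

theorem exists_mem_normalizer_zpowers_apply_eq_self_apply_eq (hp : (Fintype.card α).Prime)
    (hy : orderOf y = Fintype.card α) {c c' d : α} (hc' : c' ≠ c) (hd : d ≠ c) :
    ∃ w ∈ normalizer (zpowers y : Set (Perm α)), w c = c ∧ w c' = d := by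
  obtain ⟨i, rfl⟩ := exists_zpow_apply_eq_of_orderOf_eq_card hp hy c c'
  obtain ⟨j, rfl⟩ := exists_zpow_apply_eq_of_orderOf_eq_card hp hy c d
  have hyp : (orderOf y).Prime := hy ▸ hp
  have hi : y ^ i ≠ 1 := fun h ↦ hc' (by rw [h, one_apply])
  have hj : y ^ j ≠ 1 := fun h ↦ hd (by rw [h, one_apply])
  have hoi := orderOf_eq_of_mem_zpowers_of_ne_one hyp (zpow_mem_zpowers y i) hi
  have hoj := orderOf_eq_of_mem_zpowers_of_ne_one hyp (zpow_mem_zpowers y j) hj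
  obtain ⟨w, hw⟩ : ∃ w : Perm α, w * y ^ i * w⁻¹ = y ^ j := by
    rw [← isConj_iff]
    have hci := isCycle_of_prime_order'' hp (hoi.trans hy)
    have hcj := isCycle_of_prime_order'' hp (hoj.trans hy)
    exact hci.isConj hcj (by rw [← hci.orderOf, ← hcj.orderOf, hoi, hoj])
  have hgi := zpowers_eq_of_mem_zpowers_of_ne_one hyp (zpow_mem_zpowers y i) hi
  have hgj := zpowers_eq_of_mem_zpowers_of_ne_one hyp (zpow_mem_zpowers y j) hj
  have hwN : w ∈ normalizer (zpowers y : Set (Perm α)) := by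
    rw [← hgi]
    exact mem_normalizer_zpowers_of_zpowers_conj_eq (by rw [hw, hgi, hgj])
  obtain ⟨s, hs⟩ := exists_zpow_apply_eq_of_orderOf_eq_card hp hy (w c) c
  refine ⟨y ^ s * w, mul_mem (le_normalizer (zpow_mem_zpowers y s)) hwN, hs, ?_⟩
  have hwi : y ^ s * w * y ^ i = y ^ j * (y ^ s * w) := by
    rw [mul_assoc, mul_inv_eq_iff_eq_mul.mp hw, ← mul_assoc, ← mul_assoc,
      (Commute.zpow_zpow_self y s j).eq]
  rw [← mul_apply, hwi, mul_apply, mul_apply, hs]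

theorem exists_mem_normalizer_zpowers_apply_eq_apply_eq (hp : (Fintype.card α).Prime)
    (hy : orderOf y = Fintype.card α) {a b c d : α} (hab : a ≠ b) (hcd : c ≠ d) :
    ∃ v ∈ normalizer (zpowers y : Set (Perm α)), v a = c ∧ v b = d := by
  obtain ⟨m, hm⟩ := exists_zpow_apply_eq_of_orderOf_eq_card hp hy a c
  have hbc : (y ^ m) b ≠ c := hm ▸ (y ^ m).injective.ne hab.symm
  obtain ⟨w, hwN, hwc, hwd⟩ :=
    exists_mem_normalizer_zpowers_apply_eq_self_apply_eq hp hy hbc hcd.symm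
  exact ⟨w * y ^ m, mul_mem hwN (le_normalizer (zpow_mem_zpowers y m)),
    by rw [mul_apply, hm, hwc], by rw [mul_apply, hwd]⟩

end Equiv.Perm

theorem stmt_6_general (n : ℕ) (hp : n.Prime) (x y : Equiv.Perm (Fin n))
    (hx : x.IsSwap) (hy : y.IsCycle) (hy' : y.support.card = n) :
    ∀ g : Equiv.Perm (Fin n), ∃ u ∈ Subgroup.normalizer (Subgroup.zpowers x : Set (Equiv.Perm (Fin n))),
      ∃ v ∈ Subgroup.normalizer (Subgroup.zpowers y : Set (Equiv.Perm (Fin n))), g = u * v := by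
  intro g
  obtain ⟨a, b, hab, rfl⟩ := hx
  have hcard : (Fintype.card (Fin n)).Prime := (Fintype.card_fin n).symm ▸ hp
  have hyo : orderOf y = Fintype.card (Fin n) := by rw [hy.orderOf, hy', Fintype.card_fin]
  obtain ⟨v, hv, hva, hvb⟩ := exists_mem_normalizer_zpowers_apply_eq_apply_eq hcard hyo
    (g⁻¹.injective.ne hab) hab
  refine ⟨g * v⁻¹, mem_normalizer_zpowers_swap_of_apply_eq_self ?_ ?_, v, hv, by group⟩
  · rw [mul_apply, inv_eq_iff_eq.mpr hva.symm, ← mul_apply, mul_inv_cancel, one_apply]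
  · rw [mul_apply, inv_eq_iff_eq.mpr hvb.symm, ← mul_apply, mul_inv_cancel, one_apply]

/-- For a prime `n ≥ 5`, if `x` is a transposition and `y` an `n`-cycle in `Sym(n)`, then
`Sym(n) = N(⟨x⟩) N(⟨y⟩)`. -/
theorem stmt_6 (n : ℕ) (hn : 5 ≤ n) (hp : n.Prime) (x y : Equiv.Perm (Fin n))
    (hx : x.IsSwap) (hy : y.IsCycle) (hy' : y.support.card = n) :
    ∀ g : Equiv.Perm (Fin n), ∃ u ∈ Subgroup.normalizer (Subgroup.zpowers x : Set (Equiv.Perm (Fin n))),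
      ∃ v ∈ Subgroup.normalizer (Subgroup.zpowers y : Set (Equiv.Perm (Fin n))), g = u * v :=
  stmt_6_general n hp x y hx hy hy'
end

section
/- Let n ≥ 5. There do not exist non-identity permutations x, y ∈ Sym(n) such that every element of Sym(n) is a product u·v with u ∈ C_{Sym(n)}(x) and v ∈ C_{Sym(n)}(y). -/
/-!
If `Sym(n) = C(x) C(y)`, then `C(x)` acts transitively by conjugation on the conjugacy class
of `y`, so every function of a conjugate `z` of `y` that is invariant under conjugation by
`C(x)` is constant on that class; by symmetry the same holds with `x` and `y` exchanged.

If `x` and `y` both have fixed points, `#(supp z ∩ supp x)` is such a function, and conjugating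
by a transposition that moves one point of `supp z` into or out of `supp x` changes it.

Otherwise we may assume `x` is fixed-point-free. Then the number `A` of common arcs
`p ↦ z p = x p` (with `z p ≠ p`) is invariant, and averaging it over all conjugates of `y` gives
`(n - 1) A = #supp y ≤ n`. Some conjugate shares an arc with `x`, so `A = 1` and `y` moves
`n - 1 ≥ 4` points; but then some conjugate of `y` shares two arcs with `x`.
-/

open Equiv Finset
open scoped Nat

section Factorization

variable {G : Type*} [Group G]

theorem forall_exists_mul_symm {H K : Subgroup G} (h : ∀ g : G, ∃ u ∈ H, ∃ v ∈ K, g = u * v)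
    (g : G) : ∃ v ∈ K, ∃ u ∈ H, g = v * u := by
  obtain ⟨u, hu, v, hv, huv⟩ := h g⁻¹
  exact ⟨v⁻¹, inv_mem hv, u⁻¹, inv_mem hu, by rw [← mul_inv_rev, ← huv, inv_inv]⟩

theorem apply_conj_eq_of_forall_exists_mul {x y : G}
    (h : ∀ g : G, ∃ u ∈ Subgroup.centralizer {x}, ∃ v ∈ Subgroup.centralizer {y}, g = u * v)
    {β : Type*} {f : G → β} (hf : ∀ u ∈ Subgroup.centralizer {x}, ∀ z, f (u * z * u⁻¹) = f z)
    (g : G) : f (g * y * g⁻¹) = f y := by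
  obtain ⟨u, hu, v, hv, rfl⟩ := h g
  have hvy : v * y * v⁻¹ = y := by
    rw [Subgroup.mem_centralizer_singleton_iff.mp hv, mul_inv_cancel_right]
  calc f (u * v * y * (u * v)⁻¹) = f (u * (v * y * v⁻¹) * u⁻¹) := by
        simp only [mul_inv_rev, mul_assoc]
    _ = f y := by rw [hvy, hf u hu]

end Factorization

namespace Finset

variable {α : Type*} [DecidableEq α]

theorem map_swap_of_mem_of_notMem {s : Finset α} {a b : α} (ha : a ∈ s) (hb : b ∉ s) :
    s.map (swap a b).toEmbedding = insert b (s.erase a) := by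
  ext p
  rw [mem_map_equiv, symm_swap, mem_insert, mem_erase]
  by_cases hpa : p = a
  · subst hpa; simp [swap_apply_left, hb, ne_of_mem_of_not_mem ha hb]
  by_cases hpb : p = b
  · subst hpb; simp [ha]
  · simp [swap_apply_of_ne_of_ne hpa hpb, hpa, hpb]

theorem card_map_swap_inter_add {s : Finset α} {a b : α} (ha : a ∈ s) (hb : b ∉ s)
    (M : Finset α) :
    #(s.map (swap a b).toEmbedding ∩ M) + (if a ∈ M then 1 else 0) =
      #(s ∩ M) + (if b ∈ M then 1 else 0) := by
  have hinsert : ∀ c ∉ s.erase a,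
      #(insert c (s.erase a) ∩ M) = #(s.erase a ∩ M) + if c ∈ M then 1 else 0 := by
    intro c hc
    split_ifs with hcM
    · rw [insert_inter_of_mem hcM, card_insert_of_notMem fun h => hc (mem_of_mem_inter_left h)]
    · rw [insert_inter_of_notMem hcM, add_zero]
  conv_rhs => rw [← insert_erase ha]
  rw [map_swap_of_mem_of_notMem ha hb, hinsert b fun h => hb (mem_of_mem_erase h),
    hinsert a (notMem_erase a _)]
  ring

end Finset

namespace Equiv.Perm

variable {α : Type*} [Fintype α] [DecidableEq α]

theorem card_support_conj_inter_support {x u : Perm α} (hu : u ∈ Subgroup.centralizer {x})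
    (z : Perm α) : #((u * z * u⁻¹).support ∩ x.support) = #(z.support ∩ x.support) := by
  have hux : u * x * u⁻¹ = x := by
    rw [Subgroup.mem_centralizer_singleton_iff.mp hu, mul_inv_cancel_right]
  conv_lhs => rw [← hux, support_conj, support_conj, ← map_inter, card_map]

theorem eq_empty_or_eq_univ_of_card_support_conj_inter {y : Perm α} (hy : y ≠ 1)
    (hfix : y.support ≠ univ) {M : Finset α}
    (hM : ∀ g : Perm α, #((g * y * g⁻¹).support ∩ M) = #(y.support ∩ M)) :
    M = ∅ ∨ M = univ := by
  have hswap : ∀ a ∈ y.support, ∀ b ∉ y.support, (a ∈ M ↔ b ∈ M) := by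
    intro a ha b hb
    have h := card_map_swap_inter_add ha hb M
    rw [← support_conj, hM] at h
    split_ifs at h <;> simp_all
  obtain ⟨a, ha⟩ := nonempty_iff_ne_empty.mpr (support_eq_empty_iff.not.mpr hy)
  obtain ⟨b, hb⟩ : ∃ b, b ∉ y.support := by simpa [eq_univ_iff_forall] using hfix
  have hall : ∀ p, p ∈ M ↔ a ∈ M := fun p => by
    by_cases hp : p ∈ y.support
    · exact (hswap p hp b hb).trans (hswap a ha b hb).symm
    · exact (hswap a ha p hp).symm
  by_cases haM : a ∈ M
  · exact Or.inr (eq_univ_of_forall fun p => (hall p).mpr haM)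
  · exact Or.inl (eq_empty_of_forall_notMem fun p hp => haM ((hall p).mp hp))

def commonArcs (x z : Perm α) : Finset α := {p | z p ≠ p ∧ z p = x p}

@[simp]
theorem mem_commonArcs {x z : Perm α} {p : α} : p ∈ commonArcs x z ↔ z p ≠ p ∧ z p = x p := by
  rw [commonArcs, mem_filter_univ]

theorem card_commonArcs_conj {x u : Perm α} (hu : u ∈ Subgroup.centralizer {x}) (z : Perm α) :
    #(commonArcs x (u * z * u⁻¹)) = #(commonArcs x z) := by
  have hxu : ∀ p, x (u p) = u (x p) := fun p => by
    rw [← mul_apply, ← mul_apply, Subgroup.mem_centralizer_singleton_iff.mp hu]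
  refine (card_equiv u fun p => ?_).symm
  simp [hxu]

theorem mem_commonArcs_conj {x y g : Perm α} {a p : α} (ha : y a ≠ a) (hp : g a = p)
    (hxp : g (y a) = x p) : p ∈ commonArcs x (g * y * g⁻¹) := by
  subst hp
  simpa [hxp] using g.injective.ne ha

theorem card_filter_apply_pair_eq {P : α → α → Prop} [DecidableRel P] {a b c d : α}
    (hab : a ≠ b) (hcd : c ≠ d) :
    #{g : Perm α | P (g a) (g b)} = #{g : Perm α | P (g c) (g d)} := by
  obtain ⟨σ, hσ⟩ := exists_extending_pair ![c, d] ![a, b]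
    (by simp [Function.Injective, Fin.forall_fin_two, hcd, hcd.symm])
    (by simp [Function.Injective, Fin.forall_fin_two, hab, hab.symm])
  have hσc : σ c = a := hσ 0
  have hσd : σ d = b := hσ 1
  exact card_equiv (Equiv.mulRight σ) fun g => by simp [hσc, hσd]

theorem card_offDiag_mul_card_filter_apply_eq (x : Perm α) {a b : α} (hab : a ≠ b) :
    #(univ : Finset α).offDiag * #{g : Perm α | x (g a) = g b} =
      (Fintype.card α)! * #x.support := by
  have harcs : ∀ g : Perm α, #{cd ∈ (univ : Finset α).offDiag | x (g cd.1) = g cd.2} =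
      #x.support := fun g => by
    refine card_nbij' (fun cd => g cd.1) (fun p => (g⁻¹ p, g⁻¹ (x p))) ?_ ?_ ?_ ?_
    · intro cd hcd
      simp only [coe_filter, mem_offDiag, mem_univ, true_and, Set.mem_ofPred_eq] at hcd
      simp [hcd.2, Ne.symm hcd.1]
    · intro p hp
      simpa [eq_comm] using hp
    · intro cd hcd
      simp only [coe_filter, Set.mem_ofPred_eq] at hcd
      simp [hcd.2]
    · intro p _
      simp
  calc #(univ : Finset α).offDiag * #{g : Perm α | x (g a) = g b}
      = ∑ cd ∈ (univ : Finset α).offDiag, #{g : Perm α | x (g cd.1) = g cd.2} := by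
        rw [sum_congr rfl fun cd hcd => card_filter_apply_pair_eq (P := fun p q => x p = q)
          (mem_offDiag.mp hcd).2.2 hab, sum_const, smul_eq_mul]
    _ = ∑ g : Perm α, #{cd ∈ (univ : Finset α).offDiag | x (g cd.1) = g cd.2} :=
        (sum_card_bipartiteAbove_eq_sum_card_bipartiteBelow _).symm
    _ = (Fintype.card α)! * #x.support := by
        rw [sum_congr rfl fun g _ => harcs g, sum_const, card_univ, Fintype.card_perm, smul_eq_mul]

theorem card_offDiag_mul_sum_card_commonArcs (x y : Perm α) :
    #(univ : Finset α).offDiag * ∑ g : Perm α, #(commonArcs x (g * y * g⁻¹)) =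
      (Fintype.card α)! * #x.support * #y.support := by
  have hconj : ∀ g : Perm α, #(commonArcs x (g * y * g⁻¹)) =
      #{a ∈ y.support | x (g a) = g (y a)} := fun g =>
    (card_equiv g fun a => by simp [eq_comm]).symm
  calc #(univ : Finset α).offDiag * ∑ g : Perm α, #(commonArcs x (g * y * g⁻¹))
      = #(univ : Finset α).offDiag * ∑ a ∈ y.support, #{g : Perm α | x (g a) = g (y a)} := by
        rw [sum_congr rfl fun g _ => hconj g]
        exact congrArg _ (sum_card_bipartiteAbove_eq_sum_card_bipartiteBelow _)
    _ = (Fintype.card α)! * #x.support * #y.support := by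
        rw [mul_sum, sum_congr rfl fun a ha =>
          card_offDiag_mul_card_filter_apply_eq x (mem_support.mp ha).symm, sum_const,
          smul_eq_mul, mul_comm]

theorem exists_injective_arcs_of_four_le_card_support {z : Perm α} (hz : 4 ≤ #z.support) :
    ∃ a c : α, Function.Injective ![a, z a, c, z c] := by
  obtain ⟨a, ha⟩ : z.support.Nonempty := card_pos.mp (by omega)
  obtain ⟨c, hc⟩ : (z.support \ {a, z a, z⁻¹ a}).Nonempty := by
    refine card_pos.mp (lt_of_lt_of_le ?_ (le_card_sdiff _ _))
    have := card_le_three (a := a) (b := z a) (c := z⁻¹ a)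
    omega
  simp only [mem_sdiff, mem_insert, mem_singleton, not_or] at hc
  obtain ⟨hcz, hca, hcza, hcza'⟩ := hc
  have hac : z a ≠ z c := z.injective.ne (Ne.symm hca)
  have haz : z c ≠ a := fun h => hcza' (by rw [← h]; simp)
  rw [mem_support] at ha hcz
  exact ⟨a, c, by simp [Function.Injective, Fin.forall_fin_succ, ha, hcz, hca, hcza, hac, haz,
    Ne.symm ha, Ne.symm hcz, Ne.symm hca, Ne.symm hcza, Ne.symm hac, Ne.symm haz]⟩

theorem exists_one_le_card_commonArcs_conj {x y : Perm α} (hx : x ≠ 1) (hy : y ≠ 1) :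
    ∃ g : Perm α, 1 ≤ #(commonArcs x (g * y * g⁻¹)) := by
  obtain ⟨a, ha⟩ : ∃ a, y a ≠ a := by simpa [Equiv.Perm.ext_iff] using hy
  obtain ⟨p, hp⟩ : ∃ p, x p ≠ p := by simpa [Equiv.Perm.ext_iff] using hx
  obtain ⟨g, hg⟩ := exists_extending_pair ![a, y a] ![p, x p]
    (by simp [Function.Injective, Fin.forall_fin_two, ha, Ne.symm ha])
    (by simp [Function.Injective, Fin.forall_fin_two, hp, Ne.symm hp])
  exact ⟨g, card_pos.mpr ⟨p, mem_commonArcs_conj ha (hg 0) (hg 1)⟩⟩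

theorem exists_two_le_card_commonArcs_conj {x y : Perm α} (hx : 4 ≤ #x.support)
    (hy : 4 ≤ #y.support) : ∃ g : Perm α, 2 ≤ #(commonArcs x (g * y * g⁻¹)) := by
  obtain ⟨a, c, hac⟩ := exists_injective_arcs_of_four_le_card_support hy
  obtain ⟨p, q, hpq⟩ := exists_injective_arcs_of_four_le_card_support hx
  obtain ⟨g, hg⟩ := exists_extending_pair _ _ hac hpq
  have hp := mem_commonArcs_conj (hac.ne (by decide : (0 : Fin 4) ≠ 1)).symm (hg 0) (hg 1)
  have hq := mem_commonArcs_conj (hac.ne (by decide : (2 : Fin 4) ≠ 3)).symm (hg 2) (hg 3)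
  refine ⟨g, ?_⟩
  rw [← card_pair (hpq.ne (by decide : (0 : Fin 4) ≠ 2))]
  exact card_le_card (insert_subset hp (singleton_subset_iff.mpr hq))

theorem card_sub_one_mul_card_commonArcs_of_forall_conj_eq {x y : Perm α}
    (hx : x.support = univ)
    (hconst : ∀ g : Perm α, #(commonArcs x (g * y * g⁻¹)) = #(commonArcs x y)) :
    (Fintype.card α - 1) * #(commonArcs x y) = #y.support := by
  cases isEmpty_or_nonempty α
  · simp [eq_empty_of_isEmpty y.support]
  set n := Fintype.card α
  have h := card_offDiag_mul_sum_card_commonArcs x y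
  simp only [hconst, sum_const, card_univ, Fintype.card_perm, smul_eq_mul, hx,
    offDiag_card, ← Nat.mul_sub_one] at h
  refine Nat.eq_of_mul_eq_mul_left (by positivity : 0 < n * n !) ?_
  calc n * n ! * ((n - 1) * #(commonArcs x y)) = n * (n - 1) * (n ! * #(commonArcs x y)) := by
        ring
    _ = n * n ! * #y.support := by rw [h]; ring

theorem not_forall_card_commonArcs_conj_eq {x y : Perm α} (hx : x.support = univ) (hy : y ≠ 1)
    (hα : 5 ≤ Fintype.card α) :
    ¬ ∀ g : Perm α, #(commonArcs x (g * y * g⁻¹)) = #(commonArcs x y) := by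
  intro hconst
  have hcount := card_sub_one_mul_card_commonArcs_of_forall_conj_eq hx hconst
  obtain ⟨p⟩ : Nonempty α := Fintype.card_pos_iff.mp (by omega)
  have hx1 : x ≠ 1 := fun h => by simpa [h] using hx.ge (mem_univ p)
  obtain ⟨g₁, hg₁⟩ := exists_one_le_card_commonArcs_conj hx1 hy
  rw [hconst g₁] at hg₁
  have hone : #(commonArcs x y) = 1 := by
    by_contra hne
    have := Nat.mul_le_mul_left (Fintype.card α - 1) (show 2 ≤ #(commonArcs x y) by omega)
    have := card_le_univ y.support
    omega
  obtain ⟨g₂, hg₂⟩ := exists_two_le_card_commonArcs_conj (x := x) (y := y)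
    (by rw [hx, card_univ]; omega) (by rw [← hcount, hone]; omega)
  rw [hconst g₂] at hg₂
  omega

end Equiv.Perm

/-- For `n ≥ 5`, the symmetric group `Sym(n)` admits no factorization
`Sym(n) = C(x) C(y)` with `x, y` non-identity permutations. -/
theorem stmt_7 (n : ℕ) (hn : 5 ≤ n) :
    ¬ ∃ x y : Equiv.Perm (Fin n), x ≠ 1 ∧ y ≠ 1 ∧
      ∀ g : Equiv.Perm (Fin n), ∃ u ∈ Subgroup.centralizer {x},
        ∃ v ∈ Subgroup.centralizer {y}, g = u * v := by
  rintro ⟨x, y, hx, hy, hfac⟩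
  have hcard : 5 ≤ Fintype.card (Fin n) := by rwa [Fintype.card_fin]
  by_cases hxd : x.support = univ
  · exact Perm.not_forall_card_commonArcs_conj_eq hxd hy hcard
      (apply_conj_eq_of_forall_exists_mul hfac (f := fun z => #(Perm.commonArcs x z))
        fun u hu => Perm.card_commonArcs_conj hu)
  by_cases hyd : y.support = univ
  · exact Perm.not_forall_card_commonArcs_conj_eq hyd hx hcard
      (apply_conj_eq_of_forall_exists_mul (forall_exists_mul_symm hfac)
        (f := fun z => #(Perm.commonArcs y z)) fun u hu => Perm.card_commonArcs_conj hu)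
  obtain h | h := Perm.eq_empty_or_eq_univ_of_card_support_conj_inter hy hyd
    (apply_conj_eq_of_forall_exists_mul hfac (f := fun z => #(z.support ∩ x.support))
      fun u hu => Perm.card_support_conj_inter_support hu)
  · exact hx (Perm.support_eq_empty_iff.mp h)
  · exact hxd h
end

section
/- Let r ≥ 5 be a prime, let F be the field with r elements, and let G := PGL₂(F) = GL₂(F)/Z(GL₂(F)). Let x ∈ G be an element of order r, and let y ∈ G be an element such that every matrix A ∈ GL₂(F) whose image in G is y admits no eigenvector, i.e., there is no nonzero v ∈ F² and c ∈ F with A·v = c·v. Then every element of G is a product u·v with u ∈ N_G(⟨x⟩) and v ∈ N_G(⟨y⟩). -/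
/-!
Lift `y` to a matrix `A`. As `A` has no eigenvector, `a + b A` is invertible for `(a, b) ≠ 0`,
so the image `T` in `G = PGL₂(F)` of the centralizer of `A` has at least `r + 1` elements; it
centralizes `y`. The subgroup `⟨x⟩` has order `r` and index `r² - 1`, so it is a Sylow subgroup
and there are at most `r + 1` of them. A lift of `x` is `w + N` with `N ≠ 0`, `N² = 0`; an
element of `T` normalizing `⟨x⟩` preserves the line `ker N`, so it has an eigenvector and,
commuting with `A`, is scalar. Hence `T` acts simply transitively on the Sylow `r`-subgroups,
and for `g ∈ G` the `t ∈ T` with `t • ⟨x⟩ = g⁻¹ • ⟨x⟩` gives `g = (g t) t⁻¹`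
with `g t ∈ N_G(⟨x⟩)`.
-/

open Matrix

namespace Matrix

variable {n K : Type*} [Fintype n] [DecidableEq n] [Field K]

def HasEigenvector (A : Matrix n n K) : Prop :=
  ∃ (v : n → K) (c : K), v ≠ 0 ∧ A *ᵥ v = c • v

theorem pow_card_eq_zero_of_isNilpotent {N : Matrix n n K} (hN : IsNilpotent N) :
    N ^ Fintype.card n = 0 := by
  have hχ : N.charpoly = Polynomial.X ^ Fintype.card n :=
    sub_eq_zero.mp (isNilpotent_charpoly_sub_pow_of_isNilpotent hN).eq_zero
  simpa [hχ] using N.aeval_self_charpoly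

theorem exists_isNilpotent_sub_smul_one (p : ℕ) [Fact p.Prime] [CharP K p] [PerfectRing K p]
    [Nonempty n] {X : Matrix n n K} {z : K} (hX : X ^ p = z • 1) :
    ∃ w : K, IsNilpotent (X - w • 1) := by
  obtain ⟨w, hw⟩ := surjective_frobenius K p z
  refine ⟨w, p, ?_⟩
  rw [sub_pow_char_of_commute p ((Commute.one_right X).smul_right w), hX, smul_pow, one_pow,
    ← hw, frobenius_def, sub_self]

theorem isUnit_smul_one_add_smul {A : Matrix n n K} (hA : ¬ A.HasEigenvector) {a b : K}
    (hab : (a, b) ≠ 0) : IsUnit (a • (1 : Matrix n n K) + b • A) := by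
  rw [isUnit_iff_isUnit_det, isUnit_iff_ne_zero, Ne, ← exists_mulVec_eq_zero_iff]
  rintro ⟨v, hv, hv0⟩
  rw [add_mulVec, smul_mulVec, smul_mulVec, one_mulVec] at hv0
  rcases eq_or_ne b 0 with rfl | hb
  · have ha : a ≠ 0 := fun ha => hab (by simp [ha])
    simp_all
  · refine hA ⟨v, -(a / b), hv, ?_⟩
    rw [neg_smul, eq_neg_iff_add_eq_zero, ← smul_right_inj hb, smul_add, smul_smul,
      mul_div_cancel₀ _ hb, smul_zero, add_comm, hv0]

theorem smul_one_add_smul_injective [Nonempty n] {A : Matrix n n K} (hA : ¬ A.HasEigenvector) :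
    Function.Injective fun p : K × K => p.1 • (1 : Matrix n n K) + p.2 • A := by
  rintro ⟨a, b⟩ ⟨c, d⟩ h
  by_contra hne
  have hsub : (a - c) • (1 : Matrix n n K) + (b - d) • A = 0 := by
    simp only at h
    rw [sub_smul, sub_smul]
    linear_combination (norm := module) h
  refine not_isUnit_zero (hsub ▸ isUnit_smul_one_add_smul hA ?_)
  simpa [Prod.ext_iff, sub_eq_zero] using hne

theorem exists_eq_smul_of_mulVec_eq_zero {M : Matrix (Fin 2) (Fin 2) K} (hM : M ≠ 0)
    {u v : Fin 2 → K} (hv : v ≠ 0) (hMv : M *ᵥ v = 0) (hMu : M *ᵥ u = 0) :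
    ∃ d : K, u = d • v := by
  by_contra! h
  have hli : LinearIndependent K ![u, v] :=
    linearIndependent_fin2.mpr ⟨by simpa using hv, fun a ha => h a ha.symm⟩
  let b := basisOfLinearIndependentOfCardEqFinrank hli (by simp)
  have hb : toLin' M = 0 := b.ext fun i => by fin_cases i <;> simp [b, hMu, hMv]
  exact hM (toLin'.injective (by rw [hb, map_zero]))

theorem exists_eq_smul_one_of_commute {A B : Matrix (Fin 2) (Fin 2) K}
    (hA : ¬ A.HasEigenvector) (hB : B.HasEigenvector) (hAB : Commute A B) :
    ∃ c : K, B = c • 1 := by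
  obtain ⟨v, c, hv, hBv⟩ := hB
  refine ⟨c, sub_eq_zero.mp (by_contra fun hM => ?_)⟩
  have hMv : (B - c • 1) *ᵥ v = 0 := by rw [sub_mulVec, hBv, smul_mulVec, one_mulVec, sub_self]
  have hMAv : (B - c • 1) *ᵥ (A *ᵥ v) = 0 := by
    rw [mulVec_mulVec, ← (hAB.sub_right ((Commute.one_right A).smul_right c)).eq,
      ← mulVec_mulVec, hMv, mulVec_zero]
  obtain ⟨d, hd⟩ := exists_eq_smul_of_mulVec_eq_zero hM hv hMv hMAv
  exact hA ⟨v, d, hv, hd⟩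

/-- `P = B N B⁻¹` is square-zero and commutes with `N`, so `ker P = ker N`, a line that `B` maps
onto `ker P`. -/
theorem hasEigenvector_of_mul_eq_mul {N P B : Matrix (Fin 2) (Fin 2) K} (hN : N ≠ 0)
    (hN2 : N * N = 0) (hB : IsUnit B) (hPN : Commute P N) (h : B * N = P * B) :
    B.HasEigenvector := by
  obtain ⟨w, hw⟩ : ∃ w, N *ᵥ w ≠ 0 := by
    by_contra! h0
    exact hN (toLin'.injective (LinearMap.ext fun w => by simpa using h0 w))
  set v := N *ᵥ w
  have hNv : N *ᵥ v = 0 := by rw [mulVec_mulVec, hN2, zero_mulVec]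
  have hP : P ≠ 0 := by
    rintro rfl
    rw [zero_mul, hB.mul_right_eq_zero] at h
    exact hN h
  have hP2 : P * P = 0 := by
    rw [← hB.mul_left_eq_zero, mul_assoc, ← h, ← mul_assoc, ← h, mul_assoc, hN2, mul_zero]
  obtain ⟨α, hα⟩ := exists_eq_smul_of_mulVec_eq_zero hN hw hNv (u := P *ᵥ v) (by
    rw [mulVec_mulVec, ← hPN.eq, ← mulVec_mulVec, hNv, mulVec_zero])
  have hPv : P *ᵥ v = 0 := by
    have hαα : (α * α) • v = 0 := by
      rw [← smul_smul, ← hα, ← mulVec_smul, ← hα, mulVec_mulVec, hP2, zero_mulVec]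
    rw [hα, (smul_eq_zero.mp hαα).resolve_right hw |> mul_self_eq_zero.mp, zero_smul]
  obtain ⟨d, hd⟩ := exists_eq_smul_of_mulVec_eq_zero hP hw hPv (u := B *ᵥ v) (by
    rw [mulVec_mulVec, ← h, ← mulVec_mulVec, hNv, mulVec_zero])
  exact ⟨v, d, hw, hd⟩

end Matrix

theorem Nat.Prime.not_dvd_sq_sub_one {p : ℕ} (hp : p.Prime) : ¬ p ∣ p ^ 2 - 1 := fun h =>
  hp.not_dvd_one <|
    (Nat.dvd_sub_iff_right (Nat.one_le_pow _ _ hp.pos) (dvd_pow_self p two_ne_zero)).mp h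

theorem Nat.le_add_one_of_dvd_sq_sub_one {r d : ℕ} (hr : 1 < r) (hd : d ∣ r ^ 2 - 1)
    (hdr : d ≡ 1 [MOD r]) : d ≤ r + 1 := by
  obtain ⟨e, he⟩ := hd
  have hre : r ∣ e + 1 := by
    rw [← ZMod.natCast_eq_zero_iff]
    have h := congrArg (Nat.cast : ℕ → ZMod r) he
    rw [Nat.cast_sub (Nat.one_le_pow _ _ (by omega)), Nat.cast_mul,
      (ZMod.natCast_eq_natCast_iff _ _ _).mpr hdr] at h
    push_cast at h ⊢
    simp only [ZMod.natCast_self] at h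
    linear_combination -h
  refine Nat.le_of_mul_le_mul_right (c := r - 1) ?_ (by omega)
  calc d * (r - 1) ≤ d * e :=
        Nat.mul_le_mul_left d (by have := Nat.le_of_dvd (by omega) hre; omega)
    _ = (r + 1) * (r - 1) := by rw [← he]; simpa using Nat.sq_sub_sq r 1

theorem Subgroup.card_map_mk'_mul_card {G : Type*} [Group G] [Finite G] {N H : Subgroup G}
    [N.Normal] (hNH : N ≤ H) :
    Nat.card (H.map (QuotientGroup.mk' N)) * Nat.card N = Nat.card H := by
  have hH := H.card_mul_index
  have hHN := (H.map (QuotientGroup.mk' N)).card_mul_index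
  rw [H.index_map_eq (QuotientGroup.mk'_surjective N) (by rwa [QuotientGroup.ker_mk'])] at hHN
  have hN := N.card_mul_index
  refine Nat.eq_of_mul_eq_mul_right (Nat.pos_of_ne_zero H.index_ne_zero_of_finite) ?_
  rw [hH, ← hN, mul_right_comm, hHN, mul_comm]
  rfl

theorem Subgroup.map_centralizer_le_normalizer_zpowers {G H : Type*} [Group G] [Group H]
    (f : G →* H) (a : G) : (centralizer {a}).map f ≤ normalizer (zpowers (f a) : Set H) := by
  refine (le_centralizer_iff.mpr (zpowers_le.mpr ?_)).trans (centralizer_le_normalizer _)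
  rintro _ ⟨b, hb, rfl⟩
  rw [← map_mul, mem_centralizer_singleton_iff.mp hb, map_mul]

theorem Subgroup.exists_smul_eq_of_card_le {G X : Type*} [Group G] [MulAction G X] [Finite X]
    {T : Subgroup G} {x : X} (hfree : ∀ t ∈ T, t • x = x → t = 1)
    (hcard : Nat.card X ≤ Nat.card T) (y : X) : ∃ t ∈ T, t • x = y := by
  have hinj : Function.Injective fun t : T => (t : G) • x := by
    intro t₁ t₂ h
    have h1 := hfree _ (T.mul_mem (T.inv_mem t₂.2) t₁.2) (by
      simp only at h
      rw [mul_smul, h, inv_smul_smul])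
    exact Subtype.ext (inv_mul_eq_one.mp h1).symm
  obtain ⟨t, ht⟩ := (hinj.bijective_of_nat_card_le hcard).2 y
  exact ⟨t, t.2, ht⟩

theorem Sylow.exists_mem_normalizer_mul_mem {G : Type*} [Group G] {p : ℕ} {T : Subgroup G}
    (P : Sylow p G) (hT : ∀ Q : Sylow p G, ∃ t ∈ T, t • P = Q) (g : G) :
    ∃ u ∈ Subgroup.normalizer (P : Set G), ∃ t ∈ T, g = u * t := by
  obtain ⟨t, htT, ht⟩ := hT (g⁻¹ • P)
  refine ⟨g * t, Sylow.smul_eq_iff_mem_normalizer.mp ?_, t⁻¹, T.inv_mem htT, by group⟩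
  rw [mul_smul, ht, smul_inv_smul]

namespace Matrix.GeneralLinearGroup

open Subgroup

variable {n K : Type*} [Fintype n] [DecidableEq n] [Field K]

theorem mk_eq_one_iff_eq_smul_one {g : GL n K} :
    (g : GL n K ⧸ center (GL n K)) = 1 ↔ ∃ c : K, (g : Matrix n n K) = c • 1 := by
  rw [QuotientGroup.eq_one_iff, mem_center_iff_val_mem_range_scalar]
  exact exists_congr fun c => by rw [scalar_apply, smul_one_eq_diagonal, eq_comm]

theorem exists_eq_smul_of_mk_eq_mk {g h : GL n K}
    (hgh : (g : GL n K ⧸ center (GL n K)) = h) : ∃ c : K, (h : Matrix n n K) = c • g := by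
  obtain ⟨c, hc⟩ := mk_eq_one_iff_eq_smul_one.mp (QuotientGroup.eq_one_iff (g⁻¹ * h) |>.mpr
    (QuotientGroup.eq.mp hgh))
  refine ⟨c, ?_⟩
  rw [← mul_inv_cancel_left g h, Units.val_mul, hc, Matrix.mul_smul, mul_one]

theorem card_center [Fintype K] [Nonempty n] :
    Nat.card (center (GL n K)) = Fintype.card K - 1 := by
  have hinj : Function.Injective (scalar n : Kˣ →* GL n K) := fun a b h =>
    Units.ext (scalar_inj.mp (congrArg Units.val h))
  rw [center_eq_range_scalar, ← Nat.card_congr (MonoidHom.ofInjective hinj).toEquiv,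
    Nat.card_units, Nat.card_eq_fintype_card]

theorem card_quotient_center_fin_two [Fintype K] :
    Nat.card (GL (Fin 2) K ⧸ center (GL (Fin 2) K)) =
      Fintype.card K * (Fintype.card K ^ 2 - 1) := by
  have h := (center (GL (Fin 2) K)).card_mul_index
  rw [card_center, card_GL_field, Fin.prod_univ_two] at h
  have hq : 1 < Fintype.card K := Fintype.one_lt_card
  refine Nat.eq_of_mul_eq_mul_left (show 0 < Fintype.card K - 1 by omega) ?_
  change _ * (center (GL (Fin 2) K)).index = _
  rw [h]
  have : 1 ≤ Fintype.card K ^ 2 := Nat.one_le_pow _ _ (by omega)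
  have : Fintype.card K ≤ Fintype.card K ^ 2 := Nat.le_self_pow (by norm_num) _
  simp only [Fin.val_zero, Fin.val_one, pow_zero, pow_one]
  zify [*, hq.le]
  ring

theorem index_zpowers_of_orderOf_eq_card [Fintype K]
    {x : GL (Fin 2) K ⧸ center (GL (Fin 2) K)} (hx : orderOf x = Fintype.card K) :
    (zpowers x).index = Fintype.card K ^ 2 - 1 := by
  have h := (zpowers x).card_mul_index
  rw [Nat.card_zpowers, hx, card_quotient_center_fin_two] at h
  exact Nat.eq_of_mul_eq_mul_left Fintype.card_pos h

theorem sq_sub_one_le_card_centralizer [Fintype K] {A : GL (Fin 2) K}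
    (hA : ¬ (A : Matrix (Fin 2) (Fin 2) K).HasEigenvector) :
    Fintype.card K ^ 2 - 1 ≤ Nat.card (centralizer {A}) := by
  classical
  let f : {p : K × K // p ≠ 0} → centralizer {A} := fun p =>
    ⟨(isUnit_smul_one_add_smul hA p.2).unit, mem_centralizer_singleton_iff.mpr <| Units.ext <|
      (((Commute.one_left _).smul_left _).add_left ((Commute.refl _).smul_left _)).eq⟩
  have hf : Function.Injective f := fun p p' h => Subtype.ext <| smul_one_add_smul_injective hA <|
    congrArg (fun u : centralizer {A} => ((u : GL (Fin 2) K) : Matrix (Fin 2) (Fin 2) K)) h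
  calc Fintype.card K ^ 2 - 1 = Nat.card {p : K × K // p ≠ 0} := by
        rw [Nat.card_eq_fintype_card, Fintype.card_subtype_compl, Fintype.card_prod, sq]
        simp
    _ ≤ _ := Nat.card_le_card_of_injective f hf

theorem add_one_le_card_map_centralizer [Fintype K] {A : GL (Fin 2) K}
    (hA : ¬ (A : Matrix (Fin 2) (Fin 2) K).HasEigenvector) :
    Fintype.card K + 1 ≤ Nat.card ((centralizer {A}).map (QuotientGroup.mk' (center _))) := by
  refine Nat.le_of_mul_le_mul_right ?_ (Nat.sub_pos_of_lt (Fintype.one_lt_card (α := K)))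
  calc (Fintype.card K + 1) * (Fintype.card K - 1) = Fintype.card K ^ 2 - 1 := by
        simpa using (Nat.sq_sub_sq _ 1).symm
    _ ≤ Nat.card (centralizer {A}) := sq_sub_one_le_card_centralizer hA
    _ = _ := by rw [← card_map_mk'_mul_card (center_le_centralizer {A}), card_center]

theorem mk_eq_one_of_mem_normalizer_zpowers (p : ℕ) [Fact p.Prime] [CharP K p] [PerfectRing K p]
    {x : GL (Fin 2) K ⧸ center (GL (Fin 2) K)} (hx : x ≠ 1) (hxp : x ^ p = 1)
    {A B : GL (Fin 2) K} (hA : ¬ (A : Matrix (Fin 2) (Fin 2) K).HasEigenvector)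
    (hAB : Commute A B)
    (hB : (B : GL (Fin 2) K ⧸ center (GL (Fin 2) K)) ∈ normalizer (zpowers x : Set _)) :
    (B : GL (Fin 2) K ⧸ center (GL (Fin 2) K)) = 1 := by
  obtain ⟨X, rfl⟩ := QuotientGroup.mk_surjective x
  obtain ⟨z, hz⟩ := mk_eq_one_iff_eq_smul_one.mp (by rwa [← QuotientGroup.mk_pow] at hxp)
  rw [Units.val_pow_eq_pow_val] at hz
  obtain ⟨w, hw⟩ := exists_isNilpotent_sub_smul_one p hz
  set N := (X : Matrix (Fin 2) (Fin 2) K) - w • 1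
  have hN2 : N * N = 0 := by simpa [sq] using pow_card_eq_zero_of_isNilpotent hw
  have hN : N ≠ 0 := fun h => hx (mk_eq_one_iff_eq_smul_one.mpr ⟨w, sub_eq_zero.mp h⟩)
  obtain ⟨k, hk⟩ : ∃ k : ℕ, (X : GL (Fin 2) K ⧸ center (GL (Fin 2) K)) ^ k =
      B * X * (B : GL (Fin 2) K ⧸ center (GL (Fin 2) K))⁻¹ :=
    (isOfFinOrder_iff_pow_eq_one.mpr ⟨p, (Fact.out : p.Prime).pos, hxp⟩)
      |>.mem_powers_iff_mem_zpowers.mpr ((mem_normalizer_iff.mp hB _).mp (mem_zpowers _))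
  obtain ⟨c, hc⟩ := exists_eq_smul_of_mk_eq_mk (g := X ^ k * B) (h := B * X) (by
    rw [QuotientGroup.mk_mul, QuotientGroup.mk_mul, QuotientGroup.mk_pow, hk,
      inv_mul_cancel_right])
  have hPN : Commute (c • (X : Matrix (Fin 2) (Fin 2) K) ^ k - w • 1) N :=
    ((((Commute.refl _).pow_right k).smul_right c).sub_right
      ((Commute.one_right _).smul_right w)).sub_left ((Commute.one_left _).smul_left w) |>.symm
  have hBN : (B : Matrix (Fin 2) (Fin 2) K) * N =
      (c • (X : Matrix (Fin 2) (Fin 2) K) ^ k - w • 1) * B := by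
    simp only [Units.val_mul, Units.val_pow_eq_pow_val] at hc
    rw [mul_sub, hc, sub_mul, Matrix.smul_mul, Matrix.mul_smul, Matrix.smul_mul, mul_one, one_mul]
  obtain ⟨d, hd⟩ := exists_eq_smul_one_of_commute hA
    (hasEigenvector_of_mul_eq_mul hN hN2 B.isUnit hPN hBN) (congrArg Units.val hAB)
  exact mk_eq_one_iff_eq_smul_one.mpr ⟨d, hd⟩

end Matrix.GeneralLinearGroup

open Subgroup Matrix.GeneralLinearGroup

theorem stmt_8_general (r : ℕ) (hr : r.Prime)
    (F : Type*) [Field F] [Fintype F] (hF : Fintype.card F = r)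
    (x y : Matrix.GeneralLinearGroup (Fin 2) F ⧸
      Subgroup.center (Matrix.GeneralLinearGroup (Fin 2) F))
    (hx : orderOf x = r)
    (hy : ∀ A : Matrix.GeneralLinearGroup (Fin 2) F, (QuotientGroup.mk A : _) = y →
      ¬ ∃ (v : Fin 2 → F) (c : F), v ≠ 0 ∧
        Matrix.mulVec (A : Matrix (Fin 2) (Fin 2) F) v = c • v) :
    ∀ g : Matrix.GeneralLinearGroup (Fin 2) F ⧸
        Subgroup.center (Matrix.GeneralLinearGroup (Fin 2) F),
      ∃ u ∈ Subgroup.normalizer (Subgroup.zpowers x : Set _),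
        ∃ v ∈ Subgroup.normalizer (Subgroup.zpowers y : Set _), g = u * v := by
  have := Fact.mk hr
  have : CharP F r := charP_of_card_eq_prime hF
  subst hF
  obtain ⟨A, rfl⟩ := QuotientGroup.mk_surjective y
  have hA : ¬ (A : Matrix (Fin 2) (Fin 2) F).HasEigenvector := hy A rfl
  have hindex := index_zpowers_of_orderOf_eq_card hx
  let P : Sylow (Fintype.card F) _ :=
    (IsPGroup.of_card (n := 1) (by rw [Nat.card_zpowers, hx, pow_one])).toSylow
      (hindex ▸ hr.not_dvd_sq_sub_one)
  let T := (centralizer {A}).map (QuotientGroup.mk' (center (GL (Fin 2) F)))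
  have hfree : ∀ t ∈ T, t • P = P → t = 1 := by
    rintro _ ⟨B, hB, rfl⟩ hBP
    exact mk_eq_one_of_mem_normalizer_zpowers _
      (fun h => hr.ne_one (hx ▸ orderOf_eq_one_iff.mpr h)) (hx ▸ pow_orderOf_eq_one x) hA
      (mem_centralizer_singleton_iff.mp hB).symm (Sylow.smul_eq_iff_mem_normalizer.mp hBP)
  have hcard : Nat.card (Sylow (Fintype.card F) _) ≤ Nat.card T :=
    (Nat.le_add_one_of_dvd_sq_sub_one hr.one_lt (hindex ▸ P.card_dvd_index)
      (card_sylow_modEq_one _ _)).trans (add_one_le_card_map_centralizer hA)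
  intro g
  obtain ⟨u, hu, t, ht, rfl⟩ :=
    P.exists_mem_normalizer_mul_mem (exists_smul_eq_of_card_le hfree hcard) g
  exact ⟨u, hu, t, map_centralizer_le_normalizer_zpowers _ A ht, rfl⟩

/-- Line 3 of Table 1: in `G = PGL₂(r)` with `r ≥ 5` prime, if `|x| = r` and `y` has no
1-dimensional eigenspace, then `G = N_G(⟨x⟩) N_G(⟨y⟩)`. -/
theorem stmt_8 (r : ℕ) (hr : r.Prime) (hr5 : 5 ≤ r)
    (F : Type*) [Field F] [Fintype F] (hF : Fintype.card F = r)
    (x y : Matrix.GeneralLinearGroup (Fin 2) F ⧸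
      Subgroup.center (Matrix.GeneralLinearGroup (Fin 2) F))
    (hx : orderOf x = r)
    (hy : ∀ A : Matrix.GeneralLinearGroup (Fin 2) F, (QuotientGroup.mk A : _) = y →
      ¬ ∃ (v : Fin 2 → F) (c : F), v ≠ 0 ∧
        Matrix.mulVec (A : Matrix (Fin 2) (Fin 2) F) v = c • v) :
    ∀ g : Matrix.GeneralLinearGroup (Fin 2) F ⧸
        Subgroup.center (Matrix.GeneralLinearGroup (Fin 2) F),
      ∃ u ∈ Subgroup.normalizer (Subgroup.zpowers x : Set _),
        ∃ v ∈ Subgroup.normalizer (Subgroup.zpowers y : Set _), g = u * v :=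
  stmt_8_general r hr F hF x y hx hy
end
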